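/- Guaranteed writes of adapted binary WOM codes on q-level cells: if a binary WOM code guarantees t writes on binary cells (for any sequence of t messages, there exist cell state vectors in F_2^n that are componentwise nondecreasing and represent the successive messages), then the complement scheme on q-level cells guarantees at least (q-1)t writes. Formally: for any sequence of (q-1)t messages, there exists a sequence of vectors in {0,...,q-1}^n, componentwise nondecreasing, such that the j-th vector reduced modulo 2, after subtracting floor((j-1)/t) * (all-ones) appropriately, represents the j-th message via the binary WOM code, and all entries stay at most q-1. -/

import Mathlib

/-!
Write `j = a t + r` with `0 ≤ r < t`. The writes of block `a` run one fresh `t`-write sequence of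
the binary code and add `a` to every cell. Inside a block the binary codewords increase; across
blocks the shift grows by at least one, which covers any drop of a binary entry from `1` to `0`.
The largest shift is `q - 2`, so no cell exceeds `q - 1`.
-/

namespace Fin

variable {m n : ℕ}

theorem divNat_le_divNat {j k : Fin (m * n)} (h : j ≤ k) : j.divNat ≤ k.divNat :=
  Nat.div_le_div_right (c := n) h

theorem modNat_le_modNat_of_divNat_eq {j k : Fin (m * n)} (h : j ≤ k)
    (hdiv : j.divNat = k.divNat) : j.modNat ≤ k.modNat := by
  have hj := Nat.div_add_mod (j : ℕ) n
  have hk := Nat.div_add_mod (k : ℕ) n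
  have hdiv' : (j : ℕ) / n = (k : ℕ) / n := congrArg Fin.val hdiv
  change (j : ℕ) % n ≤ (k : ℕ) % n
  rw [Fin.le_iff_val_le_val] at h
  rw [hdiv'] at hj
  omega

end Fin

theorem ite_one_zero_mono {b b' : Bool} (h : b ≤ b') :
    (if b then 1 else 0 : ℕ) ≤ if b' then 1 else 0 := by
  revert h
  cases b <;> cases b' <;> decide

section ComplementScheme

variable {m t n : ℕ}

def complementState (c : Fin m → Fin t → Fin n → Bool) (j : Fin (m * t)) (i : Fin n) : ℕ :=
  (if c j.divNat j.modNat i then 1 else 0) + j.divNat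

theorem complementState_le (c : Fin m → Fin t → Fin n → Bool) (j : Fin (m * t)) (i : Fin n) :
    complementState c j i ≤ m := by
  have hlt := j.divNat.isLt
  unfold complementState
  split <;> omega

theorem complementState_mono {c : Fin m → Fin t → Fin n → Bool} (hc : ∀ a, Monotone (c a)) :
    Monotone (complementState c) := by
  intro j k hjk i
  dsimp only [complementState]
  rcases (Fin.divNat_le_divNat hjk).lt_or_eq with hlt | heq
  · have hbit : (if c j.divNat j.modNat i then 1 else 0 : ℕ) ≤ 1 := by split <;> omega
    have hlt' : (j.divNat : ℕ) < k.divNat := hlt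
    omega
  · have hbit := ite_one_zero_mono
      (hc k.divNat (Fin.modNat_le_modNat_of_divNat_eq hjk heq) i)
    rw [heq]
    omega

end ComplementScheme

theorem complement_scheme_guarantee_general {M : Type*} (n t q : ℕ)
    (decode : (Fin n → Bool) → M)
    (hguar : ∀ ms : Fin t → M, ∃ c : Fin t → Fin n → Bool,
      (∀ j k : Fin t, j ≤ k → ∀ i, c j i ≤ c k i) ∧ ∀ j, decode (c j) = ms j) :
    ∀ ms : Fin ((q - 1) * t) → M, ∃ S : Fin ((q - 1) * t) → Fin n → ℕ,
      (∀ j k, j ≤ k → ∀ i, S j i ≤ S k i) ∧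
      (∀ j i, S j i ≤ q - 1) ∧
      (∀ j, ∃ bv : Fin n → Bool, decode bv = ms j ∧
        ∀ i, S j i = (if bv i then 1 else 0) + (j : ℕ) / t) := by
  intro ms
  choose c hmono hdec using fun a : Fin (q - 1) => hguar fun r => ms (finProdFinEquiv (a, r))
  refine ⟨complementState c, fun j k hjk => complementState_mono hmono hjk,
    complementState_le c, fun j => ⟨c j.divNat j.modNat, ?_, fun i => rfl⟩⟩
  rw [hdec]
  exact congrArg ms (finProdFinEquiv.apply_symm_apply j)

/-- Complement scheme: a binary WOM code guaranteeing t writes yields, on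
q-level cells, at least (q-1)t guaranteed writes; on write j the state is a
binary codeword shifted up by ⌊j/t⌋·(1,…,1), entries stay ≤ q-1, and states
are componentwise nondecreasing. -/
theorem complement_scheme_guarantee {M : Type*} (n t q : ℕ) (hq : 2 ≤ q)
    (decode : (Fin n → Bool) → M)
    (hguar : ∀ ms : Fin t → M, ∃ c : Fin t → Fin n → Bool,
      (∀ j k : Fin t, j ≤ k → ∀ i, c j i ≤ c k i) ∧ ∀ j, decode (c j) = ms j) :
    ∀ ms : Fin ((q - 1) * t) → M, ∃ S : Fin ((q - 1) * t) → Fin n → ℕ,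
      (∀ j k, j ≤ k → ∀ i, S j i ≤ S k i) ∧
      (∀ j i, S j i ≤ q - 1) ∧
      (∀ j, ∃ bv : Fin n → Bool, decode bv = ms j ∧
        ∀ i, S j i = (if bv i then 1 else 0) + (j : ℕ) / t) :=
  complement_scheme_guarantee_general n t q decode hguar
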